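/- arXiv:1504.05401 — 4 statements merged into one kernel-verified Lean document; each statement's English description precedes it below -/
import Mathlib

section
/- Let G be a (P6, banner, C5)-free graph, let H be an induced house with vertices v1,...,v5 (4-cycle v1v2v3v4 plus v5 adjacent to v2, v3), and let Q be a connected vertex set disjoint from and anticomplete to H. If a vertex x has exactly two neighbors on H and also has a neighbor in Q, then N_H(x) = {v2, v3} or N_H(x) = {v1, v4}. -/
open SimpleGraph

/-- The banner: a 4-cycle 0-1-2-3-0 with a pendant vertex 4 adjacent to 0. -/
def banner : SimpleGraph (Fin 5) :=
  SimpleGraph.fromRel (fun i j => (i, j) ∈ [((0 : Fin 5), 1), (1, 2), (2, 3), (3, 0), (0, 4)])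

/-- The house: a 4-cycle 0-1-2-3-0 with a vertex 4 adjacent to 2 and 3. -/
def house : SimpleGraph (Fin 5) :=
  SimpleGraph.fromRel (fun i j => (i, j) ∈ [((0 : Fin 5), 1), (1, 2), (2, 3), (3, 0), (2, 4), (3, 4)])

/-- The chordless 4-cycle. -/
def cycle4 : SimpleGraph (Fin 4) :=
  SimpleGraph.fromRel (fun i j => j = i + 1)

/-- The chordless 5-cycle. -/
def cycle5 : SimpleGraph (Fin 5) :=
  SimpleGraph.fromRel (fun i j => j = i + 1)

/-- The complete bipartite graph K_{2,3}. -/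
def k23 : SimpleGraph (Fin 2 ⊕ Fin 3) := completeBipartiteGraph (Fin 2) (Fin 3)

/-- `G` contains no induced copy of `F` (an embedding preserves both adjacency
and non-adjacency). -/
def Free {W : Type*} {V : Type*} (F : SimpleGraph W) (G : SimpleGraph V) : Prop :=
  IsEmpty (F ↪g G)

/-- `v 0, ..., v 4` form an induced (chordless) 5-cycle of `G`, edges `v i - v (i+1)`. -/
def IsInducedC5 {V : Type*} (G : SimpleGraph V) (v : Fin 5 → V) : Prop :=
  Function.Injective v ∧ ∀ i j, G.Adj (v i) (v j) ↔ (j = i + 1 ∨ i = j + 1)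

/-- `v 0, ..., v 4` form an induced house in `G`: 4-cycle `v 0, v 1, v 2, v 3`
(standing for v1,v2,v3,v4) plus `v 4` (standing for v5) adjacent to `v 1` and `v 2`. -/
def IsInducedHouse {V : Type*} (G : SimpleGraph V) (v : Fin 5 → V) : Prop :=
  Function.Injective v ∧ ∀ i j, G.Adj (v i) (v j) ↔
    ((i, j) ∈ [((0 : Fin 5), 1), (1, 2), (2, 3), (3, 0), (1, 4), (2, 4)] ∨
     (j, i) ∈ [((0 : Fin 5), 1), (1, 2), (2, 3), (3, 0), (1, 4), (2, 4)])

/-- `Q` is disjoint from and anticomplete to the five vertices `v 0, ..., v 4`. -/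
def Anticomplete5 {V : Type*} (G : SimpleGraph V) (Q : Set V) (v : Fin 5 → V) : Prop :=
  (∀ i, v i ∉ Q) ∧ ∀ q ∈ Q, ∀ i, ¬ G.Adj q (v i)

/-! If `x` sees `q ∈ Q`, then `q` is a pendant vertex at `x` with no neighbour on the house
`H`. Every pair of neighbours of `x` on `H` other than `{v2, v3}` and `{v1, v4}` then yields an
induced `P6` or banner on `H ∪ {x, q}`: e.g. if `x` sees `v1` but none of `v3, v4, v5`, then
`q - x - v1 - v4 - v3 - v5` is an induced `P6`. Up to the left-right reflection of the house
there are four such obstructions, and they leave only the two pairs of the statement. -/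

theorem Free.false_of_adj_iff {W V : Type*} {F : SimpleGraph W} {G : SimpleGraph V}
    (hF : _root_.Free F G) (f : W → V) (hf : Function.Injective f)
    (hadj : ∀ i j, G.Adj (f i) (f j) ↔ F.Adj i j) : False :=
  hF.false ⟨⟨f, hf⟩, hadj _ _⟩

section ForbiddenPatterns

variable {V : Type*} {G : SimpleGraph V}

-- `b` and `d` are twins in the banner, so the adjacencies alone do not force `b ≠ d`.
theorem Free.false_of_induced_banner (hban : _root_.Free banner G) {a b c d e : V} (hbd : b ≠ d)
    (hab : G.Adj a b) (hbc : G.Adj b c) (hcd : G.Adj c d) (hda : G.Adj d a) (hae : G.Adj a e)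
    (hac : ¬G.Adj a c) (hbd' : ¬G.Adj b d) (hbe : ¬G.Adj b e) (hce : ¬G.Adj c e)
    (hde : ¬G.Adj d e) : False := by
  refine hban.false_of_adj_iff ![a, b, c, d, e] (fun i j hij => ?_) (fun i j => ?_) <;> clear hban
  · fin_cases i <;> fin_cases j <;> simp_all [G.adj_comm]
  · fin_cases i <;> fin_cases j <;> simp_all [banner, G.adj_comm]

theorem Free.false_of_induced_path6 (hp6 : _root_.Free (pathGraph 6) G) {a b c d e f : V}
    (hab : G.Adj a b) (hbc : G.Adj b c) (hcd : G.Adj c d) (hde : G.Adj d e) (hef : G.Adj e f)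
    (hac : ¬G.Adj a c) (had : ¬G.Adj a d) (hae : ¬G.Adj a e) (haf : ¬G.Adj a f)
    (hbd : ¬G.Adj b d) (hbe : ¬G.Adj b e) (hbf : ¬G.Adj b f)
    (hce : ¬G.Adj c e) (hcf : ¬G.Adj c f) (hdf : ¬G.Adj d f) : False := by
  refine hp6.false_of_adj_iff ![a, b, c, d, e, f] (fun i j hij => ?_) (fun i j => ?_) <;>
    clear hp6
  · fin_cases i <;> fin_cases j <;> simp_all [G.adj_comm]
  · fin_cases i <;> fin_cases j <;> simp_all [pathGraph_adj, G.adj_comm]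

end ForbiddenPatterns

/-- Half of the restrictions on the trace `N = N_H(x)` on a house `H` of a vertex `x` with a
neighbour anticomplete to `H`; the other half is their mirror image under `houseFlip`. -/
def IsAdmissibleTrace (N : Fin 5 → Prop) : Prop :=
  (N 0 → N 2 ∨ N 3 ∨ N 4) ∧ (N 0 → N 2 → N 3) ∧ (N 0 → N 4 → N 1) ∧ (N 1 → N 0 ∨ N 2 ∨ N 3)

instance (N : Fin 5 → Prop) [DecidablePred N] : Decidable (IsAdmissibleTrace N) := by
  unfold IsAdmissibleTrace; infer_instance

def houseFlip : Fin 5 → Fin 5 := ![3, 2, 1, 0, 4]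

theorem eq_or_eq_of_isAdmissibleTrace (T : Finset (Fin 5)) (hT : T.card = 2)
    (h : IsAdmissibleTrace (· ∈ T)) (h' : IsAdmissibleTrace (houseFlip · ∈ T)) :
    T = {1, 2} ∨ T = {0, 3} := by
  revert T
  decide

namespace IsInducedHouse

variable {V : Type*} {G : SimpleGraph V} {v : Fin 5 → V}

theorem adj (hH : IsInducedHouse G v) (i j : Fin 5)
    (hij : (i, j) ∈ [((0 : Fin 5), 1), (1, 2), (2, 3), (3, 0), (1, 4), (2, 4)] ∨
      (j, i) ∈ [((0 : Fin 5), 1), (1, 2), (2, 3), (3, 0), (1, 4), (2, 4)] := by decide) :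
    G.Adj (v i) (v j) :=
  (hH.2 i j).2 hij

theorem not_adj (hH : IsInducedHouse G v) (i j : Fin 5)
    (hij : ¬((i, j) ∈ [((0 : Fin 5), 1), (1, 2), (2, 3), (3, 0), (1, 4), (2, 4)] ∨
      (j, i) ∈ [((0 : Fin 5), 1), (1, 2), (2, 3), (3, 0), (1, 4), (2, 4)]) := by decide) :
    ¬G.Adj (v i) (v j) :=
  fun h => hij ((hH.2 i j).1 h)

theorem comp_houseFlip (hH : IsInducedHouse G v) : IsInducedHouse G (v ∘ houseFlip) :=
  ⟨hH.1.comp (by decide), fun i j => (hH.2 _ _).trans (by revert i j; decide)⟩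

theorem isAdmissibleTrace (hH : IsInducedHouse G v) (hp6 : _root_.Free (pathGraph 6) G)
    (hban : _root_.Free banner G) {x q : V} (hxq : G.Adj x q) (hq : ∀ i, ¬G.Adj q (v i)) :
    IsAdmissibleTrace (fun i => G.Adj x (v i)) := by
  have hqx : ∀ i, ¬G.Adj (v i) q := fun i h => hq i h.symm
  refine ⟨fun h0 => ?_, fun h0 h2 => ?_, fun h0 h4 => ?_, fun h1 => ?_⟩ <;> by_contra! hx
  · exact hp6.false_of_induced_path6 hxq.symm h0 (hH.adj 0 3) (hH.adj 3 2) (hH.adj 2 4)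
      (hq 0) (hq 3) (hq 2) (hq 4) hx.2.1 hx.1 hx.2.2
      (hH.not_adj 0 2) (hH.not_adj 0 4) (hH.not_adj 3 4)
  · exact hban.false_of_induced_banner (hH.1.ne (by decide : (0 : Fin 5) ≠ 2))
      h0 (hH.adj 0 3) (hH.adj 3 2) h2.symm hxq hx (hH.not_adj 0 2) (hqx 0) (hqx 3) (hqx 2)
  · exact hban.false_of_induced_banner (hH.1.ne (by decide : (0 : Fin 5) ≠ 4))
      h0 (hH.adj 0 1) (hH.adj 1 4) h4.symm hxq hx (hH.not_adj 0 4) (hqx 0) (hqx 1) (hqx 4)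
  · exact hban.false_of_induced_banner (hH.1.ne (by decide : (2 : Fin 5) ≠ 0))
      (hH.adj 1 2) (hH.adj 2 3) (hH.adj 3 0) (hH.adj 0 1) h1.symm (hH.not_adj 1 3)
      (hH.not_adj 2 0) (fun h => hx.2.1 h.symm) (fun h => hx.2.2 h.symm) (fun h => hx.1 h.symm)

end IsInducedHouse

theorem stmt_4_general {V : Type*} (G : SimpleGraph V)
    (hp6 : _root_.Free (SimpleGraph.pathGraph 6) G) (hban : _root_.Free banner G)
    (v : Fin 5 → V) (hH : IsInducedHouse G v)
    (Q : Set V) (hQ : Anticomplete5 G Q v)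
    (x : V) (h2 : ({j | G.Adj x (v j)} : Set (Fin 5)).ncard = 2)
    (hxQ : ∃ q ∈ Q, G.Adj x q) :
    {j | G.Adj x (v j)} = ({1, 2} : Set (Fin 5)) ∨
      {j | G.Adj x (v j)} = ({0, 3} : Set (Fin 5)) := by
  obtain ⟨q, hqQ, hxq⟩ := hxQ
  have hq : ∀ i, ¬G.Adj q (v i) := hQ.2 q hqQ
  obtain ⟨T, hT⟩ := (Set.toFinite {j | G.Adj x (v j)}).exists_finset_coe
  have hmem : ∀ j, G.Adj x (v j) ↔ j ∈ T := fun j => by rw [← Finset.mem_coe, hT]; rfl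
  have h := hH.isAdmissibleTrace hp6 hban hxq hq
  have h' := hH.comp_houseFlip.isAdmissibleTrace hp6 hban hxq (fun i => hq _)
  simp only [Function.comp_apply, hmem] at h h'
  rw [← hT, Set.ncard_coe_finset] at h2
  rw [← hT]
  rcases eq_or_eq_of_isAdmissibleTrace T h2 h h' with rfl | rfl <;> simp

theorem stmt_4 {V : Type*} (G : SimpleGraph V)
    (hp6 : _root_.Free (SimpleGraph.pathGraph 6) G) (hban : _root_.Free banner G)
    (hc5 : _root_.Free cycle5 G)
    (v : Fin 5 → V) (hH : IsInducedHouse G v)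
    (Q : Set V) (hQconn : (G.induce Q).Connected) (hQ : Anticomplete5 G Q v)
    (x : V) (h2 : ({j | G.Adj x (v j)} : Set (Fin 5)).ncard = 2)
    (hxQ : ∃ q ∈ Q, G.Adj x q) :
    {j | G.Adj x (v j)} = ({1, 2} : Set (Fin 5)) ∨
      {j | G.Adj x (v j)} = ({0, 3} : Set (Fin 5)) :=
  stmt_4_general G hp6 hban v hH Q hQ x h2 hxQ
end

section
/- Let G be a banner-free graph, H an induced 5-cycle with vertices v1,...,v5 (indices mod 5), and Q a connected vertex set disjoint from and anticomplete to H. Let A3+ be the set of vertices with exactly three (consecutive) neighbors on H and a neighbor in Q, and A5+ the set of vertices adjacent to all of H with a neighbor in Q. Assuming every vertex of A3+ has neighborhood on H of the form {v_{i-1}, v_i, v_{i+1}}, every vertex of A3+ is adjacent to every vertex of A5+. -/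
open SimpleGraph

/-!
Suppose `x ≁ y`, where `x` sees exactly `v (i-1), v i, v (i+1)` on the cycle and `q ∈ Q` is a
neighbour of `x`. If `y ~ q`, then `y - v (i+1) - x - q - y` is an induced 4-cycle to which
`v (i+3)` is pendant at `y`; otherwise `x - v (i-1) - y - v (i+1) - x` is one to which `q` is
pendant at `x`. Either way `G` contains a banner.
-/

def bannerEmbedding {V : Type*} {G : SimpleGraph V} {a b c d e : V}
    (hab : G.Adj a b) (hbc : G.Adj b c) (hcd : G.Adj c d) (hda : G.Adj d a) (hae : G.Adj a e)
    (hac : ¬G.Adj a c) (hbd : ¬G.Adj b d) (hbe : ¬G.Adj b e) (hce : ¬G.Adj c e)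
    (hde : ¬G.Adj d e) (hbd_ne : b ≠ d) : banner ↪g G := by
  -- `b` and `d` are the only two vertices of the banner with the same neighbourhood
  have hac_ne : a ≠ c := G.ne_of_adj_of_not_adj hae hce
  have hbe_ne : b ≠ e := G.ne_of_adj_of_not_adj hbc fun h => hce h.symm
  have hde_ne : d ≠ e := G.ne_of_adj_of_not_adj hcd.symm fun h => hce h.symm
  refine ⟨⟨![a, b, c, d, e], fun i j hij => ?_⟩, fun {i j} => ?_⟩
  · fin_cases i <;> fin_cases j <;> simp_all [G.ne_of_adj]
  · change G.Adj (![a, b, c, d, e] i) (![a, b, c, d, e] j) ↔ _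
    fin_cases i <;> fin_cases j <;> simp [banner, *, hda.symm, G.adj_comm]

theorem IsInducedC5.not_adj_add_two {V : Type*} {G : SimpleGraph V} {v : Fin 5 → V}
    (hC5 : IsInducedC5 G v) (j : Fin 5) : ¬G.Adj (v j) (v (j + 2)) := by
  rw [hC5.2]
  omega

theorem adj_of_free_banner {V : Type*} {G : SimpleGraph V} (hban : _root_.Free banner G)
    {x y a b c q : V} (hxa : G.Adj x a) (hxb : G.Adj x b) (hya : G.Adj y a) (hyb : G.Adj y b)
    (hab : ¬G.Adj a b) (hab_ne : a ≠ b) (hxq : G.Adj x q) (hqa : ¬G.Adj q a)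
    (hqb : ¬G.Adj q b) (hyc : G.Adj y c) (hxc : ¬G.Adj x c) (hqc : ¬G.Adj q c)
    (hbc : ¬G.Adj b c) (hbq_ne : b ≠ q) :
    G.Adj x y := by
  by_contra hxy
  by_cases hyq : G.Adj y q
  · exact hban.false <| bannerEmbedding hyb hxb.symm hxq hyq.symm hyc (fun h => hxy h.symm)
      (fun h => hqb h.symm) hbc hxc hqc hbq_ne
  · exact hban.false <| bannerEmbedding hxa hya.symm hyb hxb.symm hxq hxy hab
      (fun h => hqa h.symm) hyq (fun h => hqb h.symm) hab_ne

theorem stmt_12_general {V : Type*} (G : SimpleGraph V)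
    (hban : _root_.Free banner G)
    (v : Fin 5 → V) (hC5 : IsInducedC5 G v)
    (Q : Set V) (hQ : Anticomplete5 G Q v)
    (hA3 : ∀ x ∈ ({x | ({j | G.Adj x (v j)} : Set (Fin 5)).ncard = 3 ∧
              ∃ q ∈ Q, G.Adj x q} : Set V),
            ∃ i : Fin 5, {j | G.Adj x (v j)} = ({i - 1, i, i + 1} : Set (Fin 5))) :
    ∀ x ∈ ({x | ({j | G.Adj x (v j)} : Set (Fin 5)).ncard = 3 ∧ ∃ q ∈ Q, G.Adj x q} : Set V),
      ∀ y ∈ ({y | (∀ i, G.Adj y (v i)) ∧ ∃ q ∈ Q, G.Adj y q} : Set V),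
        G.Adj x y := by
  rintro x ⟨hx3, q, hqQ, hxq⟩ y ⟨hyv, -⟩
  obtain ⟨i, hNx⟩ := hA3 x ⟨hx3, q, hqQ, hxq⟩
  have hxv (j : Fin 5) : G.Adj x (v j) ↔ j = i - 1 ∨ j = i ∨ j = i + 1 := by
    simpa using Set.ext_iff.1 hNx j
  have hqv := hQ.2 q hqQ
  have hab : ¬G.Adj (v (i - 1)) (v (i + 1)) := by
    simpa [show i - 1 + 2 = i + 1 by omega] using hC5.not_adj_add_two (i - 1)
  exact adj_of_free_banner hban ((hxv _).2 (by omega)) ((hxv _).2 (by omega)) (hyv _) (hyv _)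
    hab (hC5.1.ne (by omega)) hxq (hqv _) (hqv _) (hyv (i + 1 + 2))
    (fun h => by have := (hxv _).1 h; omega) (hqv _) (hC5.not_adj_add_two _)
    (fun h => hQ.1 _ (h ▸ hqQ))

theorem stmt_12 {V : Type*} (G : SimpleGraph V)
    (hban : _root_.Free banner G)
    (v : Fin 5 → V) (hC5 : IsInducedC5 G v)
    (Q : Set V) (hQconn : (G.induce Q).Connected) (hQ : Anticomplete5 G Q v)
    (hA3 : ∀ x ∈ ({x | ({j | G.Adj x (v j)} : Set (Fin 5)).ncard = 3 ∧
              ∃ q ∈ Q, G.Adj x q} : Set V),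
            ∃ i : Fin 5, {j | G.Adj x (v j)} = ({i - 1, i, i + 1} : Set (Fin 5))) :
    ∀ x ∈ ({x | ({j | G.Adj x (v j)} : Set (Fin 5)).ncard = 3 ∧ ∃ q ∈ Q, G.Adj x q} : Set V),
      ∀ y ∈ ({y | (∀ i, G.Adj y (v i)) ∧ ∃ q ∈ Q, G.Adj y q} : Set V),
        G.Adj x y :=
  stmt_12_general G hban v hC5 Q hQ hA3
end

section
/- Let G be a (P6, banner)-free graph containing an induced 5-cycle H with vertices v1,...,v5 (indices mod 5), and let Q be a connected vertex set disjoint from and anticomplete to H. Then no vertex having a neighbor in Q has exactly one, exactly two, or exactly four neighbors on H; that is, every vertex with a neighbor in Q and at least one neighbor on H has either exactly three or exactly five neighbors on H. -/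
open SimpleGraph

/-!
Let `q ∈ Q` be a neighbour of `x` and `N` the set of neighbours of `x` on the cycle. Since `q` has
no neighbour on the cycle, the cycle together with `x` and `q` induces a seven-vertex graph that
depends only on `N`. Up to rotation, a set `N` of size 1, 2 or 4 is `{0}`, `{0, 1}`, `{0, 2}` or
`{0}ᶜ`. In the first two cases `q x v0 v1 v2 v3`, resp. `q x v0 v4 v3 v2`, is an induced `P6`; in
the other two the 4-cycle `x v0 v1 v2`, resp. `x v1 v0 v4`, with the pendant edge `xq` is an
induced banner.
-/

theorem SimpleGraph.injective_of_adj_iff {W V : Type*} {H : SimpleGraph W} {G : SimpleGraph V}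
    (hH : Function.Injective H.neighborSet) {f : W → V}
    (hf : ∀ a b, G.Adj (f a) (f b) ↔ H.Adj a b) : Function.Injective f :=
  fun a b hab => hH <| Set.ext fun c => by simp only [mem_neighborSet, ← hf, hab]

abbrev IsInducedCopy {W V : Type*} (F : SimpleGraph W) (H : SimpleGraph V) (f : W → V) : Prop :=
  Function.Injective f ∧ ∀ i j, H.Adj (f i) (f j) ↔ F.Adj i j

theorem IsInducedCopy.nonempty_embedding {W V : Type*} {F : SimpleGraph W} {H : SimpleGraph V}
    {f : W → V} (hf : IsInducedCopy F H f) : Nonempty (F ↪g H) :=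
  ⟨⟨⟨f, hf.1⟩, hf.2 _ _⟩⟩

/-- The 5-cycle `inl 0, …, inl 4`, a vertex `inr 0` whose neighbours on the cycle are `N`, and a
pendant vertex `inr 1` adjacent to `inr 0` only. -/
def c5Extension (N : Finset (Fin 5)) : SimpleGraph (Fin 5 ⊕ Fin 2) :=
  fromRel fun a b =>
    (∃ i, a = .inl i ∧ b = .inl (i + 1)) ∨ (∃ j ∈ N, a = .inr 0 ∧ b = .inl j) ∨
      (a = .inr 0 ∧ b = .inr 1)

instance (N : Finset (Fin 5)) : DecidableRel (c5Extension N).Adj := by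
  unfold c5Extension; infer_instance

instance : DecidableRel banner.Adj := by
  unfold banner; infer_instance

instance (n : ℕ) : DecidableRel (pathGraph n).Adj :=
  fun _ _ => decidable_of_iff' _ pathGraph_adj

theorem c5Extension_adj_inl_inl (N : Finset (Fin 5)) (i j : Fin 5) :
    (c5Extension N).Adj (.inl i) (.inl j) ↔ j = i + 1 ∨ i = j + 1 := by
  simp only [c5Extension, fromRel_adj, Sum.inl.injEq, reduceCtorEq, exists_eq_left', and_false,
    exists_const, false_and, or_false]
  exact and_iff_right_of_imp (by rintro (rfl | rfl) <;> simp)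

theorem c5Extension_neighborSet_injective (N : Finset (Fin 5)) :
    Function.Injective (c5Extension N).neighborSet := by
  have twinFree : ∀ N : Finset (Fin 5), ∀ a b,
      (∀ c, (c5Extension N).Adj a c ↔ (c5Extension N).Adj b c) → a = b := by
    decide
  exact fun a b hab => twinFree N a b fun c => Set.ext_iff.mp hab c

def IsInducedC5.embeddingC5Extension {V : Type*} {G : SimpleGraph V} {v : Fin 5 → V}
    (hC5 : IsInducedC5 G v) {x q : V} (hxq : G.Adj x q) (hq : ∀ i, ¬ G.Adj q (v i))
    {N : Finset (Fin 5)} (hN : ∀ j, j ∈ N ↔ G.Adj x (v j)) : c5Extension N ↪g G :=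
  have hadj : ∀ a b, G.Adj (Sum.elim v ![x, q] a) (Sum.elim v ![x, q] b) ↔
      (c5Extension N).Adj a b := by
    rintro (i | k) (j | l)
    · rw [Sum.elim_inl, Sum.elim_inl, hC5.2, c5Extension_adj_inl_inl]
    · fin_cases l <;> simp [c5Extension, hN, hq, G.adj_comm _ q, G.adj_comm _ x]
    · fin_cases k <;> simp [c5Extension, hN, hq]
    · fin_cases k <;> fin_cases l <;> simp [c5Extension, hxq, hxq.symm]
  ⟨⟨_, injective_of_adj_iff (c5Extension_neighborSet_injective N) hadj⟩, hadj _ _⟩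

theorem nonempty_pathGraph_embedding_c5Extension_singleton (a : Fin 5) :
    Nonempty (pathGraph 6 ↪g c5Extension {a}) :=
  IsInducedCopy.nonempty_embedding
    (f := ![.inr 1, .inr 0, .inl a, .inl (a + 1), .inl (a + 2), .inl (a + 3)])
    (by revert a; decide)

theorem nonempty_pathGraph_embedding_c5Extension_pair_add_one (a : Fin 5) :
    Nonempty (pathGraph 6 ↪g c5Extension {a, a + 1}) :=
  IsInducedCopy.nonempty_embedding
    (f := ![.inr 1, .inr 0, .inl a, .inl (a + 4), .inl (a + 3), .inl (a + 2)])
    (by revert a; decide)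

theorem nonempty_banner_embedding_c5Extension_pair_add_two (a : Fin 5) :
    Nonempty (banner ↪g c5Extension {a, a + 2}) :=
  IsInducedCopy.nonempty_embedding
    (f := ![.inr 0, .inl a, .inl (a + 1), .inl (a + 2), .inr 1])
    (by revert a; decide)

theorem nonempty_banner_embedding_c5Extension_compl_singleton (a : Fin 5) :
    Nonempty (banner ↪g c5Extension {a}ᶜ) :=
  IsInducedCopy.nonempty_embedding
    (f := ![.inr 0, .inl (a + 1), .inl a, .inl (a + 4), .inr 1])
    (by revert a; decide)

theorem exists_rotation_eq_of_card (N : Finset (Fin 5))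
    (hN : N.card = 1 ∨ N.card = 2 ∨ N.card = 4) :
    ∃ a, N = {a} ∨ N = {a, a + 1} ∨ N = {a, a + 2} ∨ N = {a}ᶜ := by
  revert N; decide

theorem nonempty_embedding_c5Extension {N : Finset (Fin 5)}
    (hN : N.card = 1 ∨ N.card = 2 ∨ N.card = 4) :
    Nonempty (pathGraph 6 ↪g c5Extension N) ∨ Nonempty (banner ↪g c5Extension N) := by
  obtain ⟨a, rfl | rfl | rfl | rfl⟩ := exists_rotation_eq_of_card N hN
  · exact .inl (nonempty_pathGraph_embedding_c5Extension_singleton a)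
  · exact .inl (nonempty_pathGraph_embedding_c5Extension_pair_add_one a)
  · exact .inr (nonempty_banner_embedding_c5Extension_pair_add_two a)
  · exact .inr (nonempty_banner_embedding_c5Extension_compl_singleton a)

theorem stmt_13_general {V : Type*} (G : SimpleGraph V)
    (hp6 : _root_.Free (SimpleGraph.pathGraph 6) G) (hban : _root_.Free banner G)
    (v : Fin 5 → V) (hC5 : IsInducedC5 G v)
    (Q : Set V) (hQ : Anticomplete5 G Q v) :
    ∀ x : V, (∃ q ∈ Q, G.Adj x q) →
      ({j | G.Adj x (v j)} : Set (Fin 5)).ncard ≠ 1 ∧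
      ({j | G.Adj x (v j)} : Set (Fin 5)).ncard ≠ 2 ∧
      ({j | G.Adj x (v j)} : Set (Fin 5)).ncard ≠ 4 := by
  classical
  rintro x ⟨q, hqQ, hxq⟩
  rw [Set.ncard_eq_toFinset_card']
  set N := {j | G.Adj x (v j)}.toFinset
  have hN : ∀ j, j ∈ N ↔ G.Adj x (v j) := fun _ => Set.mem_toFinset
  let e := hC5.embeddingC5Extension hxq (hQ.2 q hqQ) hN
  by_contra hcard
  exact (nonempty_embedding_c5Extension (N := N) (by omega)).elim
    (fun ⟨f⟩ => hp6.false (e.comp f)) fun ⟨f⟩ => hban.false (e.comp f)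

theorem stmt_13 {V : Type*} (G : SimpleGraph V)
    (hp6 : _root_.Free (SimpleGraph.pathGraph 6) G) (hban : _root_.Free banner G)
    (v : Fin 5 → V) (hC5 : IsInducedC5 G v)
    (Q : Set V) (hQconn : (G.induce Q).Connected) (hQ : Anticomplete5 G Q v) :
    ∀ x : V, (∃ q ∈ Q, G.Adj x q) →
      ({j | G.Adj x (v j)} : Set (Fin 5)).ncard ≠ 1 ∧
      ({j | G.Adj x (v j)} : Set (Fin 5)).ncard ≠ 2 ∧
      ({j | G.Adj x (v j)} : Set (Fin 5)).ncard ≠ 4 :=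
  stmt_13_general G hp6 hban v hC5 Q hQ
end

section
/- Let G be a graph containing an induced 4-cycle with vertices a1, b1, a2, b2 and edges a1b1, b1a2, a2b2, b2a1. If G is banner-free and house-free, and z is a vertex adjacent to b1 but not to b2, where b1 and b2 are both adjacent to a1 and a2 and b1b2 is not an edge, then z is adjacent to both a1 and a2. -/
open SimpleGraph

section InducedC4

variable {V : Type*}

theorem not_free_of_adj_iff {W : Type*} {F : SimpleGraph W} {G : SimpleGraph V} (f : W → V)
    (hf : Function.Injective f) (hadj : ∀ i j, G.Adj (f i) (f j) ↔ F.Adj i j) :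
    ¬ _root_.Free F G :=
  fun hF => hF.false ⟨⟨f, hf⟩, hadj _ _⟩

structure IsInducedC4 (G : SimpleGraph V) (w x y u : V) : Prop where
  ne_wy : w ≠ y
  ne_xu : x ≠ u
  adj_wx : G.Adj w x
  adj_xy : G.Adj x y
  adj_yu : G.Adj y u
  adj_uw : G.Adj u w
  not_adj_wy : ¬ G.Adj w y
  not_adj_xu : ¬ G.Adj x u

namespace IsInducedC4

variable {G : SimpleGraph V} {w x y u p : V}

theorem rotate (hC : IsInducedC4 G w x y u) : IsInducedC4 G x y u w where
  ne_wy := hC.ne_xu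
  ne_xu := hC.ne_wy.symm
  adj_wx := hC.adj_xy
  adj_xy := hC.adj_yu
  adj_yu := hC.adj_uw
  adj_uw := hC.adj_wx
  not_adj_wy := hC.not_adj_xu
  not_adj_xu := fun h => hC.not_adj_wy h.symm

theorem not_free_banner (hC : IsInducedC4 G w x y u) (hw : G.Adj p w) (hx : ¬ G.Adj p x)
    (hy : ¬ G.Adj p y) (hu : ¬ G.Adj p u) : ¬ _root_.Free banner G := by
  obtain ⟨hwy, hxu, hwx, hxy, hyu, huw, nwy, nxu⟩ := hC
  refine not_free_of_adj_iff ![w, x, y, u, p] (fun i j hij => ?_) fun i j => ?_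
  · fin_cases i <;> fin_cases j <;> simp at hij ⊢ <;> grind [G.adj_comm]
  · fin_cases i <;> fin_cases j <;> simp [banner] <;> grind [G.adj_comm]

theorem not_free_house (hC : IsInducedC4 G w x y u) (hw : G.Adj p w) (hx : G.Adj p x)
    (hy : ¬ G.Adj p y) (hu : ¬ G.Adj p u) : ¬ _root_.Free house G := by
  obtain ⟨hwy, hxu, hwx, hxy, hyu, huw, nwy, nxu⟩ := hC
  refine not_free_of_adj_iff ![y, u, w, x, p] (fun i j hij => ?_) fun i j => ?_
  · fin_cases i <;> fin_cases j <;> simp at hij ⊢ <;> grind [G.adj_comm]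
  · fin_cases i <;> fin_cases j <;> simp [house] <;> grind [G.adj_comm]

end IsInducedC4

end InducedC4

theorem stmt_16_general {V : Type*} (G : SimpleGraph V)
    (hban : _root_.Free banner G) (hhouse : _root_.Free house G)
    (a1 a2 b1 b2 z : V)
    (ha : a1 ≠ a2)
    (e1 : G.Adj a1 b1) (e2 : G.Adj b1 a2) (e3 : G.Adj a2 b2) (e4 : G.Adj b2 a1)
    (na : ¬ G.Adj a1 a2) (nb : ¬ G.Adj b1 b2)
    (hz1 : G.Adj z b1) (hz2 : ¬ G.Adj z b2) :
    G.Adj z a1 ∧ G.Adj z a2 := by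
  have hC : IsInducedC4 G a1 b1 a2 b2 :=
    ⟨ha, fun h => hz2 (h ▸ hz1), e1, e2, e3, e4, na, nb⟩
  by_cases h1 : G.Adj z a1 <;> by_cases h2 : G.Adj z a2
  · exact ⟨h1, h2⟩
  · exact (hC.not_free_house h1 hz1 h2 hz2 hhouse).elim
  · exact (hC.rotate.not_free_house hz1 h2 hz2 h1 hhouse).elim
  · exact (hC.rotate.not_free_banner hz1 h2 hz2 h1 hban).elim

theorem stmt_16 {V : Type*} (G : SimpleGraph V)
    (hban : _root_.Free banner G) (hhouse : _root_.Free house G)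
    (a1 a2 b1 b2 z : V)
    (ha : a1 ≠ a2) (hb : b1 ≠ b2)
    (e1 : G.Adj a1 b1) (e2 : G.Adj b1 a2) (e3 : G.Adj a2 b2) (e4 : G.Adj b2 a1)
    (na : ¬ G.Adj a1 a2) (nb : ¬ G.Adj b1 b2)
    (hz1 : G.Adj z b1) (hz2 : ¬ G.Adj z b2) :
    G.Adj z a1 ∧ G.Adj z a2 :=
  stmt_16_general G hban hhouse a1 a2 b1 b2 z ha e1 e2 e3 e4 na nb hz1 hz2
end
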